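/- arXiv:1203.5498 — 4 statements merged into one kernel-verified Lean document; each statement's English description precedes it below -/
import Mathlib

section
/- Let $f$ be a trigonometric polynomial of degree $n$ (i.e. $f(x) = \sum_{k=-n}^{n} c_k e^{ikx}$) with $|f(x)| \le 1$ for all $x \in \mathbb{R}$. Then for all natural numbers $N, l$ and all $x \in \mathbb{R}$: if $l \le N$ then $\left|\left(\frac{d}{dx}\right)^l f(x)^N\right| \le (Nn)^l |f(x)|^{N-l}$, and in any case $\left|\left(\frac{d}{dx}\right)^l f(x)^N\right| \le (Nn)^l$. -/
/-!
M. Riesz's interpolation formula expresses the derivative of a trigonometric polynomial `g` of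
degree `m` through `2m` translates of `g`:
`g' x = ∑_{j < 2m} (-1)^j w_j g (x + t_j)` with `t_j = (2j+1)π/(2m)` and
`w_j = 1 / (4m sin² (t_j/2)) > 0`. Since `∑ w_j = m`, this gives Bernstein's inequality
`‖g'‖∞ ≤ m ‖g‖∞`, and also shows that `g'` is again a trigonometric polynomial of degree `m`.
On `e^{ikx}` the formula reduces to `∑ w_j e^{i r t_j} = m - r` for `0 ≤ r ≤ 2m` (`r = k + m`):
these moments have vanishing second differences, since the `e^{i t_j}` are the `2m`-th roots
of `-1`, and the moment at `2m` is minus the one at `0`.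

The second bound is Bernstein's inequality applied `l` times to `f ^ N`, of degree `Nn`. For the
first, write `D^l (f ^ N) = f ^ (N - l) * g_l`, so that `g_{l+1} = (N - l) f' g_l + f g_l'` with
`g_l` of degree `ln` and `‖g_l‖∞ ≤ (Nn)^l`; Bernstein's inequality for `f` and for `g_l` gives
`‖g_{l+1}‖∞ ≤ ((N - l) n + l n) (Nn)^l`.
-/

open Complex Finset
open scoped Real

noncomputable section

def rieszNode (m j : ℕ) : ℝ := (2 * j + 1) * π / (2 * m)

def rieszWeight (m j : ℕ) : ℝ := 1 / (4 * m * Real.sin (rieszNode m j / 2) ^ 2)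

def rieszMoment (m r : ℕ) : ℂ :=
  ∑ j ∈ range (2 * m), (rieszWeight m j : ℂ) * cexp (I * r * rieszNode m j)

section Riesz

variable {m j : ℕ}

lemma sin_half_rieszNode_pos (hj : j < 2 * m) : 0 < Real.sin (rieszNode m j / 2) := by
  have hm : (0 : ℝ) < m := by exact_mod_cast (show 0 < m by omega)
  have hj' : (j : ℝ) + 1 ≤ 2 * m := by exact_mod_cast hj
  apply Real.sin_pos_of_pos_of_lt_pi
  · unfold rieszNode; positivity
  · rw [rieszNode, div_div, div_lt_iff₀ (by positivity)]
    nlinarith [Real.pi_pos]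

lemma rieszWeight_pos (hj : j < 2 * m) : 0 < rieszWeight m j := by
  have := sin_half_rieszNode_pos hj
  have hm : 0 < m := by omega
  unfold rieszWeight; positivity

lemma rieszWeight_mul_two_sub_two_cos (hj : j < 2 * m) :
    rieszWeight m j * (2 - 2 * Real.cos (rieszNode m j)) = 1 / m := by
  have hsin := (sin_half_rieszNode_pos hj).ne'
  have hm : (m : ℝ) ≠ 0 := by exact_mod_cast (show m ≠ 0 by omega)
  have hcos := Real.cos_two_mul' (rieszNode m j / 2)
  rw [mul_div_cancel₀ _ two_ne_zero, Real.cos_sq'] at hcos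
  rw [rieszWeight, hcos]
  field_simp
  ring

lemma cexp_mul_rieszNode (hm : m ≠ 0) : cexp (I * m * rieszNode m j) = I * (-1) ^ j := by
  have : I * m * rieszNode m j = (2 * j + 1 : ℕ) * (π / 2 * I) := by
    rw [rieszNode]; push_cast; field_simp
  rw [this, exp_nat_mul, exp_pi_div_two_mul_I, pow_succ, pow_mul, I_sq, mul_comm]

lemma sum_cexp_rieszNode_eq_zero {r : ℕ} (hr₀ : r ≠ 0) (hr : r < 2 * m) :
    ∑ j ∈ range (2 * m), cexp (I * r * rieszNode m j) = 0 := by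
  set ω := cexp (2 * π * I / (2 * m : ℕ))
  have hω : IsPrimitiveRoot ω (2 * m) := isPrimitiveRoot_exp _ (by omega)
  have hterm (j : ℕ) :
      cexp (I * r * rieszNode m j) = cexp (I * r * rieszNode m 0) * (ω ^ r) ^ j := by
    rw [← pow_mul, ← exp_nat_mul, ← exp_add]
    congr 1
    simp only [rieszNode]; push_cast; field_simp; ring
  have hgeom := mul_geom_sum (ω ^ r) (2 * m)
  rw [← pow_mul, mul_comm r, pow_mul, hω.pow_eq_one, one_pow, sub_self,
    mul_eq_zero, or_iff_right (sub_ne_zero.mpr (hω.pow_ne_one_of_pos_of_lt hr₀ hr))] at hgeom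
  rw [sum_congr rfl fun j _ => hterm j, ← mul_sum, hgeom, mul_zero]

-- `w_j (2 - 2 cos t_j) = 1/m` turns the second difference into a sum over roots of unity.
lemma rieszMoment_add_two_sub {r : ℕ} (hr : r + 2 ≤ 2 * m) :
    rieszMoment m (r + 2) - 2 * rieszMoment m (r + 1) + rieszMoment m r = 0 := by
  have hterm : ∀ j ∈ range (2 * m),
      (rieszWeight m j : ℂ) * cexp (I * (r + 2 : ℕ) * rieszNode m j)
        - 2 * ((rieszWeight m j : ℂ) * cexp (I * (r + 1 : ℕ) * rieszNode m j))
        + (rieszWeight m j : ℂ) * cexp (I * r * rieszNode m j)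
      = -(1 / m) * cexp (I * (r + 1 : ℕ) * rieszNode m j) := by
    intro j hj
    have hw : (rieszWeight m j : ℂ) * (2 - 2 * Complex.cos (rieszNode m j)) = 1 / m := by
      have := congrArg ((↑) : ℝ → ℂ) (rieszWeight_mul_two_sub_two_cos (mem_range.mp hj))
      push_cast at this
      exact this
    rw [show I * (r + 2 : ℕ) * rieszNode m j
          = I * (r + 1 : ℕ) * rieszNode m j + rieszNode m j * I by push_cast; ring,
      show I * r * rieszNode m j
          = I * (r + 1 : ℕ) * rieszNode m j + -(rieszNode m j) * I by push_cast; ring,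
      exp_add, exp_add, exp_mul_I, exp_mul_I, Complex.cos_neg, Complex.sin_neg]
    linear_combination (-cexp (I * (r + 1 : ℕ) * rieszNode m j)) * hw
  rw [rieszMoment, rieszMoment, rieszMoment, mul_sum, ← sum_sub_distrib, ← sum_add_distrib,
    sum_congr rfl hterm, ← mul_sum, sum_cexp_rieszNode_eq_zero (by omega) (by omega), mul_zero]

lemma rieszMoment_eq_add_mul {r : ℕ} (hr : r ≤ 2 * m) :
    rieszMoment m r = rieszMoment m 0 + r * (rieszMoment m 1 - rieszMoment m 0) := by
  suffices ∀ r, r + 1 ≤ 2 * m →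
      rieszMoment m r = rieszMoment m 0 + r * (rieszMoment m 1 - rieszMoment m 0) ∧
      rieszMoment m (r + 1) = rieszMoment m 0 + (r + 1 : ℕ) * (rieszMoment m 1 - rieszMoment m 0) by
    rcases r with _ | r
    · simp
    · exact (this r hr).2
  intro r hr
  induction r with
  | zero => simp
  | succ r ih =>
    obtain ⟨h₀, h₁⟩ := ih (by omega)
    refine ⟨h₁, ?_⟩
    push_cast at h₁ ⊢
    linear_combination rieszMoment_add_two_sub (m := m) (r := r) (by omega) + 2 * h₁ - h₀

lemma rieszMoment_two_mul (hm : m ≠ 0) : rieszMoment m (2 * m) = -rieszMoment m 0 := by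
  simp only [rieszMoment, ← sum_neg_distrib]
  refine sum_congr rfl fun j _ => ?_
  rw [show I * (2 * m : ℕ) * rieszNode m j = (2 : ℕ) * (I * m * rieszNode m j) by push_cast; ring,
    exp_nat_mul, cexp_mul_rieszNode hm, mul_pow, I_sq, ← pow_mul, mul_comm j, pow_mul]
  simp

lemma rieszMoment_zero : rieszMoment m 0 = ∑ j ∈ range (2 * m), rieszWeight m j := by
  simp [rieszMoment]

lemma re_rieszMoment_one_sub_zero (hm : m ≠ 0) :
    (rieszMoment m 1 - rieszMoment m 0).re = -1 := by
  have hterm : ∀ j ∈ range (2 * m),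
      ((rieszWeight m j : ℂ) * cexp (I * (1 : ℕ) * rieszNode m j)
        - (rieszWeight m j : ℂ) * cexp (I * (0 : ℕ) * rieszNode m j)).re = -(1 / (2 * m)) := by
    intro j hj
    have := rieszWeight_mul_two_sub_two_cos (mem_range.mp hj)
    rw [show I * ((1 : ℕ) : ℂ) * rieszNode m j = rieszNode m j * I by push_cast; ring]
    simp only [Nat.cast_zero, mul_zero, zero_mul, exp_zero, mul_one, sub_re, re_ofReal_mul,
      exp_ofReal_mul_I_re]
    linear_combination (-1 / 2 : ℝ) * this
  rw [rieszMoment, rieszMoment, ← sum_sub_distrib, re_sum, sum_congr rfl hterm, sum_const,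
    card_range, nsmul_eq_mul]
  push_cast
  field_simp

lemma rieszMoment_one_sub_zero (hm : m ≠ 0) : rieszMoment m 1 - rieszMoment m 0 = -1 := by
  have h := rieszMoment_eq_add_mul (m := m) le_rfl
  rw [rieszMoment_two_mul hm] at h
  have hreal : rieszMoment m 1 - rieszMoment m 0
      = ((-(∑ j ∈ range (2 * m), rieszWeight m j) / m : ℝ) : ℂ) := by
    have hm' : (m : ℂ) ≠ 0 := Nat.cast_ne_zero.mpr hm
    rw [ofReal_div, ofReal_neg, ← rieszMoment_zero, ofReal_natCast]
    push_cast at h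
    field_simp
    linear_combination -h / 2
  have hre := re_rieszMoment_one_sub_zero hm
  rw [hreal, ofReal_re] at hre
  rw [hreal, hre, ofReal_neg, ofReal_one]

lemma rieszMoment_eq (hm : m ≠ 0) {r : ℕ} (hr : r ≤ 2 * m) : rieszMoment m r = m - r := by
  have h₀ := rieszMoment_eq_add_mul (m := m) le_rfl
  rw [rieszMoment_two_mul hm, rieszMoment_one_sub_zero hm] at h₀
  rw [rieszMoment_eq_add_mul hr, rieszMoment_one_sub_zero hm]
  push_cast at h₀
  linear_combination -h₀ / 2

lemma sum_rieszWeight (m : ℕ) : ∑ j ∈ range (2 * m), rieszWeight m j = m := by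
  rcases eq_or_ne m 0 with rfl | hm
  · simp
  · have h := rieszMoment_eq hm (Nat.zero_le _)
    rw [rieszMoment_zero, Nat.cast_zero, sub_zero] at h
    exact_mod_cast h

lemma sum_neg_one_pow_mul_rieszWeight_mul_cexp {k : ℤ} (hk : k ∈ Set.Icc (-(m : ℤ)) m) :
    ∑ j ∈ range (2 * m), (-1) ^ j * (rieszWeight m j : ℂ) * cexp (I * k * rieszNode m j)
      = I * k := by
  rcases eq_or_ne m 0 with rfl | hm
  · simp [show k = 0 by simpa using hk]
  obtain ⟨r, hr⟩ : ∃ r : ℕ, (r : ℤ) = k + m :=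
    ⟨(k + m).toNat, Int.toNat_of_nonneg (by linarith [hk.1])⟩
  have hrk : (r : ℂ) = k + m := by exact_mod_cast hr
  have hterm (j : ℕ) : (-1) ^ j * (rieszWeight m j : ℂ) * cexp (I * k * rieszNode m j)
      = -I * ((rieszWeight m j : ℂ) * cexp (I * r * rieszNode m j)) := by
    rw [hrk, mul_add, add_mul, exp_add, cexp_mul_rieszNode hm]
    linear_combination (rieszWeight m j : ℂ) * cexp (I * k * rieszNode m j) * (-1) ^ j * I_sq
  rw [sum_congr rfl fun j _ => hterm j, ← mul_sum, ← rieszMoment,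
    rieszMoment_eq hm (by have := hk.2; omega), hrk]
  ring

end Riesz

def trigMonomial (k : ℤ) (x : ℝ) : ℂ := cexp (I * k * x)

def trigPoly (m : ℕ) : Submodule ℂ (ℝ → ℂ) :=
  Submodule.span ℂ (trigMonomial '' Set.Icc (-(m : ℤ)) m)

section TrigPoly

variable {m : ℕ} {g : ℝ → ℂ}

lemma trigMonomial_mem_trigPoly {k : ℤ} (hk : k ∈ Set.Icc (-(m : ℤ)) m) :
    trigMonomial k ∈ trigPoly m :=
  Submodule.subset_span (Set.mem_image_of_mem _ hk)

lemma trigMonomial_add (k l : ℤ) : trigMonomial (k + l) = trigMonomial k * trigMonomial l := by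
  ext x
  simp only [trigMonomial, Pi.mul_apply, ← exp_add, Int.cast_add]
  ring_nf

lemma trigMonomial_apply_add (k : ℤ) (x a : ℝ) :
    trigMonomial k (x + a) = trigMonomial k a * trigMonomial k x := by
  simp only [trigMonomial, ← exp_add, ofReal_add]
  ring_nf

lemma hasDerivAt_trigMonomial (k : ℤ) (x : ℝ) :
    HasDerivAt (trigMonomial k) (I * k * trigMonomial k x) x := by
  have h := ((hasDerivAt_id (x : ℂ)).const_mul (I * k)).cexp.comp_ofReal
  rw [mul_one, mul_comm (cexp _)] at h
  exact h

lemma trigPoly_mul_le (m m' : ℕ) : trigPoly m * trigPoly m' ≤ trigPoly (m + m') := by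
  rw [trigPoly, trigPoly, Submodule.span_mul_span]
  refine Submodule.span_le.mpr ?_
  rintro _ ⟨_, ⟨k, hk, rfl⟩, _, ⟨l, hl, rfl⟩, rfl⟩
  change trigMonomial k * trigMonomial l ∈ _
  rw [← trigMonomial_add]
  exact trigMonomial_mem_trigPoly
    ⟨by push_cast; linarith [hk.1, hl.1], by push_cast; linarith [hk.2, hl.2]⟩

lemma mul_mem_trigPoly {m m' : ℕ} {g h : ℝ → ℂ} (hg : g ∈ trigPoly m) (hh : h ∈ trigPoly m') :
    g * h ∈ trigPoly (m + m') :=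
  trigPoly_mul_le m m' (Submodule.mul_mem_mul hg hh)

lemma one_mem_trigPoly (m : ℕ) : (1 : ℝ → ℂ) ∈ trigPoly m := by
  convert trigMonomial_mem_trigPoly (k := 0) (m := m) ⟨by simp, by simp⟩
  ext x
  simp [trigMonomial]

lemma pow_mem_trigPoly {n : ℕ} {f : ℝ → ℂ} (hf : f ∈ trigPoly n) (N : ℕ) :
    f ^ N ∈ trigPoly (N * n) := by
  induction N with
  | zero => simpa using one_mem_trigPoly 0
  | succ N ih => simpa [pow_succ, add_mul] using mul_mem_trigPoly ih hf

lemma comp_add_mem_trigPoly (hg : g ∈ trigPoly m) (a : ℝ) :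
    (fun x => g (x + a)) ∈ trigPoly m := by
  suffices trigPoly m ≤ (trigPoly m).comap (LinearMap.funLeft ℂ ℂ (· + a)) from this hg
  refine Submodule.span_le.mpr ?_
  rintro _ ⟨k, hk, rfl⟩
  have : LinearMap.funLeft ℂ ℂ (· + a) (trigMonomial k) = trigMonomial k a • trigMonomial k := by
    ext x
    exact trigMonomial_apply_add k x a
  simp only [SetLike.mem_coe, Submodule.mem_comap, this]
  exact Submodule.smul_mem _ _ (trigMonomial_mem_trigPoly hk)

lemma hasDerivAt_of_mem_trigPoly (hg : g ∈ trigPoly m) (x : ℝ) :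
    HasDerivAt g
      (∑ j ∈ range (2 * m), (-1) ^ j * (rieszWeight m j : ℂ) * g (x + rieszNode m j)) x := by
  induction hg using Submodule.span_induction with
  | mem _ h =>
    obtain ⟨k, hk, rfl⟩ := h
    simp_rw [trigMonomial_apply_add, ← mul_assoc, ← sum_mul]
    simp only [trigMonomial] at hk ⊢
    rw [sum_neg_one_pow_mul_rieszWeight_mul_cexp hk]
    exact hasDerivAt_trigMonomial k x
  | zero => simp
  | add g h _ _ hg hh => simpa [mul_add, sum_add_distrib] using hg.add hh
  | smul c g _ hg => simpa [mul_sum, mul_left_comm c] using hg.const_smul c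

lemma differentiable_of_mem_trigPoly (hg : g ∈ trigPoly m) : Differentiable ℝ g :=
  fun x => (hasDerivAt_of_mem_trigPoly hg x).differentiableAt

lemma deriv_mem_trigPoly (hg : g ∈ trigPoly m) : deriv g ∈ trigPoly m := by
  have : deriv g = ∑ j ∈ range (2 * m),
      ((-1) ^ j * (rieszWeight m j : ℂ)) • fun x => g (x + rieszNode m j) := by
    ext x
    simp [(hasDerivAt_of_mem_trigPoly hg x).deriv]
  rw [this]
  exact Submodule.sum_mem _ fun j _ => Submodule.smul_mem _ _ (comp_add_mem_trigPoly hg _)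

theorem norm_deriv_le_of_mem_trigPoly (hg : g ∈ trigPoly m) {M : ℝ} (hM : ∀ x, ‖g x‖ ≤ M)
    (x : ℝ) : ‖deriv g x‖ ≤ m * M := by
  rw [(hasDerivAt_of_mem_trigPoly hg x).deriv]
  calc _ ≤ ∑ j ∈ range (2 * m), ‖(-1) ^ j * (rieszWeight m j : ℂ) * g (x + rieszNode m j)‖ :=
        norm_sum_le _ _
    _ ≤ ∑ j ∈ range (2 * m), rieszWeight m j * M := by
        refine sum_le_sum fun j hj => ?_
        have hw := (rieszWeight_pos (mem_range.mp hj)).le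
        rw [norm_mul, norm_mul, norm_pow, norm_neg, norm_one, one_pow, one_mul, norm_real,
          Real.norm_of_nonneg hw]
        exact mul_le_mul_of_nonneg_left (hM _) hw
    _ = m * M := by rw [← sum_mul, sum_rieszWeight]

lemma iteratedDeriv_mem_trigPoly (hg : g ∈ trigPoly m) (l : ℕ) :
    iteratedDeriv l g ∈ trigPoly m := by
  induction l with
  | zero => simpa
  | succ l ih => rw [iteratedDeriv_succ]; exact deriv_mem_trigPoly ih

theorem norm_iteratedDeriv_le_of_mem_trigPoly (hg : g ∈ trigPoly m) {M : ℝ}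
    (hM : ∀ x, ‖g x‖ ≤ M) (l : ℕ) (x : ℝ) : ‖iteratedDeriv l g x‖ ≤ m ^ l * M := by
  induction l generalizing x with
  | zero => simpa using hM x
  | succ l ih =>
    rw [iteratedDeriv_succ, pow_succ', mul_assoc]
    exact norm_deriv_le_of_mem_trigPoly (iteratedDeriv_mem_trigPoly hg l) ih x

end TrigPoly

lemma deriv_pow_succ_mul {f g : ℝ → ℂ} (hf : Differentiable ℝ f) (hg : Differentiable ℝ g)
    (p : ℕ) :
    deriv (f ^ (p + 1) * g) = f ^ p * (((p + 1 : ℕ) : ℂ) • (deriv f * g) + f * deriv g) := by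
  ext x
  rw [deriv_mul ((hf x).pow _) (hg x), deriv_pow (hf x)]
  simp only [Pi.mul_apply, Pi.add_apply, Pi.smul_apply, Pi.pow_apply, smul_eq_mul,
    Nat.add_sub_cancel]
  ring

lemma exists_iteratedDeriv_pow_eq_pow_mul {n N l : ℕ} {f : ℝ → ℂ} (hf : f ∈ trigPoly n)
    (hb : ∀ x, ‖f x‖ ≤ 1) (hl : l ≤ N) :
    ∃ g ∈ trigPoly (l * n), (∀ x, ‖g x‖ ≤ ((N * n : ℕ) : ℝ) ^ l) ∧
      iteratedDeriv l (f ^ N) = f ^ (N - l) * g := by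
  induction l with
  | zero => exact ⟨1, by simpa using one_mem_trigPoly 0, by simp, by simp⟩
  | succ l ih =>
    obtain ⟨g, hgT, hgb, hgeq⟩ := ih (by omega)
    refine ⟨((N - l : ℕ) : ℂ) • (deriv f * g) + f * deriv g, ?_, fun x => ?_, ?_⟩
    · rw [add_one_mul, add_comm]
      exact add_mem (Submodule.smul_mem _ _ (mul_mem_trigPoly (deriv_mem_trigPoly hf) hgT))
        (mul_mem_trigPoly hf (deriv_mem_trigPoly hgT))
    · have hf' := norm_deriv_le_of_mem_trigPoly hf hb x
      have hg' := norm_deriv_le_of_mem_trigPoly hgT hgb x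
      calc ‖(((N - l : ℕ) : ℂ) • (deriv f * g) + f * deriv g) x‖
          ≤ ((N - l : ℕ) : ℝ) * (‖deriv f x‖ * ‖g x‖) + ‖f x‖ * ‖deriv g x‖ := by
            simp only [Pi.add_apply, Pi.smul_apply, Pi.mul_apply, smul_eq_mul]
            refine (norm_add_le _ _).trans_eq ?_
            rw [norm_mul, norm_mul, norm_mul, Complex.norm_natCast]
        _ ≤ ((N - l : ℕ) : ℝ) * (n * 1 * ((N * n : ℕ) : ℝ) ^ l)
              + 1 * ((l * n : ℕ) * ((N * n : ℕ) : ℝ) ^ l) := by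
            gcongr
            · exact hgb x
            · exact hb x
        _ = ((N * n : ℕ) : ℝ) ^ (l + 1) := by
            rw [Nat.cast_sub (by omega)]
            push_cast
            ring
    · rw [iteratedDeriv_succ, hgeq, show N - l = N - (l + 1) + 1 by omega,
        deriv_pow_succ_mul (differentiable_of_mem_trigPoly hf)
          (differentiable_of_mem_trigPoly hgT)]

end

theorem stmt_11 (n : ℕ) (c : ℤ → ℂ) (f : ℝ → ℂ)
    (hf : ∀ x : ℝ, f x = ∑ k ∈ Finset.Icc (-(n : ℤ)) (n : ℤ),
      c k * Complex.exp (Complex.I * k * x))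
    (hbound : ∀ x : ℝ, ‖f x‖ ≤ 1) :
    ∀ N l : ℕ, ∀ x : ℝ,
      (l ≤ N → ‖iteratedDeriv l (fun y => f y ^ N) x‖ ≤
          ((N * n : ℕ) : ℝ) ^ l * ‖f x‖ ^ (N - l)) ∧
        ‖iteratedDeriv l (fun y => f y ^ N) x‖ ≤ ((N * n : ℕ) : ℝ) ^ l := by
  have hfT : f ∈ trigPoly n := by
    have : f = ∑ k ∈ Finset.Icc (-(n : ℤ)) n, c k • trigMonomial k := by
      ext x
      simp [hf x, trigMonomial]
    rw [this]
    exact Submodule.sum_mem _ fun k hk =>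
      Submodule.smul_mem _ _ (trigMonomial_mem_trigPoly (by simpa using hk))
  intro N l x
  rw [show (fun y => f y ^ N) = f ^ N from rfl]
  refine ⟨fun hl => ?_, ?_⟩
  · obtain ⟨g, -, hg, heq⟩ := exists_iteratedDeriv_pow_eq_pow_mul hfT hbound hl
    rw [heq, Pi.mul_apply, Pi.pow_apply, norm_mul, norm_pow, mul_comm]
    exact mul_le_mul_of_nonneg_right (hg x) (by positivity)
  · have hpow : ∀ y, ‖(f ^ N) y‖ ≤ 1 := fun y => by
      simpa using pow_le_one₀ (norm_nonneg _) (hbound y)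
    simpa using norm_iteratedDeriv_le_of_mem_trigPoly (pow_mem_trigPoly hfT N) hpow l x
end

section
/- Let $X$ be a Banach space and $A$ a densely defined closed operator generating a strongly continuous semigroup $(T(t))_{t \ge 0}$. Suppose $\alpha \in \mathbb{R}$, $t > 0$, $\zeta = e^{it\alpha}$, and $\zeta - T(t)$ is invertible in $\mathcal{L}(X)$. Then $A - i\alpha$ is invertible with bounded inverse given by $(A - i\alpha)^{-1} = -e^{it\alpha}(\zeta - T(t))^{-1} \int_0^t e^{-is\alpha} T(s)\,ds$, where the integral is taken in the strong sense. In particular, if $\|(\zeta - T(t))^{-1}\| \le K$ and $\|T(s)\| \le M$ for $s \in [0,t]$, then $\|(A - i\alpha)^{-1}\| \le KMt$. -/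
open Filter Set

/-- `A` (with domain `D`) is the infinitesimal generator of the semigroup `T`. -/
def IsGenerator {X : Type*} [NormedAddCommGroup X] [NormedSpace ℂ X]
    (T : ℝ → X →L[ℂ] X) (D : Set X) (A : X → X) : Prop :=
  (∀ x : X, x ∈ D ↔ ∃ y : X,
      Tendsto (fun t : ℝ => t⁻¹ • (T t x - x)) (nhdsWithin 0 (Ioi 0)) (nhds y)) ∧
  ∀ x ∈ D, Tendsto (fun t : ℝ => t⁻¹ • (T t x - x)) (nhdsWithin 0 (Ioi 0)) (nhds (A x))

/-! Twisting by `e^{-isα}` turns `T` into a strongly continuous semigroup `S` with generator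
`A - iα` on the same domain, and turns `ζ - T t` into `ζ (1 - S t)`. For `V = ∫₀ᵗ S s ds`,
differentiating `h ↦ S h (V x) = ∫₀^{t+h} S s x ds - ∫₀^h S s x ds` at `0⁺` shows that `V` maps
into the domain with `(A - iα) V = S t - 1`, while on the domain `V (A - iα) = S t - 1` because
`V` commutes with every `S h`. As `V` commutes with `1 - S t`, it commutes with its inverse, so
`-(1 - S t)⁻¹ V` inverts `A - iα` on both sides, and `‖V‖ ≤ M t` gives the bound. -/

section

variable {𝕜 R : Type*} [CommRing 𝕜] [Ring R] [Algebra 𝕜 R] {ζ : 𝕜} {s u q : R}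

theorem mul_one_sub_eq_one_of_smul_eq (hs : ζ • s = u) (hq : q * (ζ • 1 - u) = 1) :
    (ζ • q) * (1 - s) = 1 := by
  rw [smul_mul_assoc, ← mul_smul_comm, smul_sub, hs, hq]

theorem one_sub_mul_eq_one_of_smul_eq (hs : ζ • s = u) (hq : (ζ • 1 - u) * q = 1) :
    (1 - s) * (ζ • q) = 1 := by
  rw [mul_smul_comm, ← smul_mul_assoc, smul_sub, hs, hq]

end

section

open MeasureTheory Topology

variable {X : Type*} [NormedAddCommGroup X] [NormedSpace ℂ X]

theorem tendsto_inv_smul_sub_iff_hasDerivWithinAt {f : ℝ → X} {y : X} :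
    Tendsto (fun h : ℝ => h⁻¹ • (f h - f 0)) (𝓝[>] 0) (𝓝 y) ↔
      HasDerivWithinAt f y (Ioi 0) 0 := by
  rw [hasDerivWithinAt_iff_tendsto_slope' (s := Ioi 0) (x := 0) (by simp)]
  congr! 2 with h
  rw [slope_def_module, sub_zero]

theorem isGenerator_iff_hasDerivWithinAt {T : ℝ → X →L[ℂ] X} (hT0 : T 0 = 1) {D : Set X}
    {A : X → X} :
    IsGenerator T D A ↔
      (∀ x, x ∈ D ↔ ∃ y, HasDerivWithinAt (fun h => T h x) y (Ioi 0) 0) ∧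
        ∀ x ∈ D, HasDerivWithinAt (fun h => T h x) (A x) (Ioi 0) 0 := by
  have hx : ∀ x, T 0 x = x := by simp [hT0]
  simp only [IsGenerator, ← tendsto_inv_smul_sub_iff_hasDerivWithinAt, hx]

theorem HasDerivWithinAt.cexp_mul_smul {f : ℝ → X} {y : X} {s : Set ℝ}
    (hf : HasDerivWithinAt f y s 0) (μ : ℂ) :
    HasDerivWithinAt (fun r : ℝ => Complex.exp (μ * r) • f r) (y + μ • f 0) s 0 := by
  have hc : HasDerivAt (fun r : ℝ => Complex.exp (μ * r)) μ 0 := by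
    simpa using ((hasDerivAt_id (0 : ℂ)).const_mul μ).comp_ofReal.cexp
  convert hc.hasDerivWithinAt.smul hf using 1
  · rfl
  · simp

theorem IsGenerator.cexp_mul_smul {T : ℝ → X →L[ℂ] X} (hT0 : T 0 = 1) {D : Set X}
    {A : X → X} (hgen : IsGenerator T D A) (μ : ℂ) :
    IsGenerator (fun r : ℝ => Complex.exp (μ * r) • T r) D (fun x => A x + μ • x) := by
  rw [isGenerator_iff_hasDerivWithinAt hT0] at hgen
  rw [isGenerator_iff_hasDerivWithinAt (by simp [hT0])]
  have hunscale : ∀ x y,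
      HasDerivWithinAt (fun r : ℝ => (Complex.exp (μ * r) • T r) x) y (Ioi 0) 0 →
        HasDerivWithinAt (fun r => T r x) (y - μ • x) (Ioi 0) 0 := fun x y h => by
    simpa [smul_smul, ← Complex.exp_add, hT0, sub_eq_add_neg] using h.cexp_mul_smul (-μ)
  exact ⟨fun x => ⟨fun hx => ⟨_, (hgen.2 x hx).cexp_mul_smul μ⟩,
      fun ⟨y, hy⟩ => (hgen.1 x).2 ⟨_, hunscale x y hy⟩⟩,
    fun x hx => by simpa [hT0] using (hgen.2 x hx).cexp_mul_smul μ⟩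

theorem norm_integral_apply_le_of_norm_le {T : ℝ → X →L[ℂ] X} {t M : ℝ} (ht : 0 ≤ t)
    (hM : ∀ s ∈ Icc 0 t, ‖T s‖ ≤ M) (x : X) :
    ‖∫ s in 0..t, T s x‖ ≤ M * t * ‖x‖ := by
  have hbound : ∀ s ∈ uIoc 0 t, ‖T s x‖ ≤ M * ‖x‖ := fun s hs => by
    rw [uIoc_of_le ht] at hs
    exact (T s).le_of_opNorm_le (hM s ⟨hs.1.le, hs.2⟩) x
  calc ‖∫ s in 0..t, T s x‖ ≤ M * ‖x‖ * |t - 0| :=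
        intervalIntegral.norm_integral_le_of_norm_le_const hbound
    _ = M * t * ‖x‖ := by rw [sub_zero, abs_of_nonneg ht]; ring

structure IsStronglyContinuousSemigroup (T : ℝ → X →L[ℂ] X) : Prop where
  map_zero : T 0 = 1
  map_add : ∀ t s : ℝ, 0 ≤ t → 0 ≤ s → T (t + s) = T t * T s
  continuousOn : ∀ x, ContinuousOn (fun t => T t x) (Ici 0)

namespace IsStronglyContinuousSemigroup

variable {T : ℝ → X →L[ℂ] X} (hT : IsStronglyContinuousSemigroup T)
include hT

theorem cexp_mul_smul (μ : ℂ) :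
    IsStronglyContinuousSemigroup (fun r : ℝ => Complex.exp (μ * r) • T r) where
  map_zero := by simp [hT.map_zero]
  map_add t s ht hs := by
    rw [hT.map_add t s ht hs, smul_mul_smul_comm, ← Complex.exp_add, Complex.ofReal_add, mul_add]
  continuousOn x := by
    have hc : Continuous fun r : ℝ => Complex.exp (μ * r) := by fun_prop
    exact hc.continuousOn.smul (hT.continuousOn x)

theorem commute {s r : ℝ} (hs : 0 ≤ s) (hr : 0 ≤ r) : Commute (T s) (T r) := by
  rw [Commute, SemiconjBy, ← hT.map_add s r hs hr, ← hT.map_add r s hr hs, add_comm]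

theorem intervalIntegrable (x : X) {a b : ℝ} (ha : 0 ≤ a) (hb : 0 ≤ b) :
    IntervalIntegrable (fun s => T s x) volume a b :=
  ((hT.continuousOn x).mono fun _ hs => le_trans (le_min ha hb) hs.1).intervalIntegrable

theorem exists_norm_le [CompleteSpace X] (t : ℝ) : ∃ M, ∀ s ∈ Icc 0 t, ‖T s‖ ≤ M := by
  have hpt : ∀ x, ∃ C, ∀ s : Icc (0 : ℝ) t, ‖T s x‖ ≤ C := fun x =>
    let ⟨C, hC⟩ := isCompact_Icc.exists_bound_of_continuousOn
      ((hT.continuousOn x).mono Icc_subset_Ici_self)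
    ⟨C, fun s => hC s s.2⟩
  obtain ⟨M, hM⟩ := banach_steinhaus hpt
  exact ⟨M, fun s hs => hM ⟨s, hs⟩⟩

variable [CompleteSpace X] {t : ℝ} (ht : 0 ≤ t)

noncomputable def integralCLM : X →L[ℂ] X :=
  LinearMap.mkContinuousOfExistsBound
    { toFun := fun x => ∫ s in 0..t, T s x
      map_add' := fun x y => by
        simp only [_root_.map_add]
        exact intervalIntegral.integral_add (hT.intervalIntegrable x le_rfl ht)
          (hT.intervalIntegrable y le_rfl ht)
      map_smul' := fun c x => by
        simp only [_root_.map_smul, RingHom.id_apply]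
        exact intervalIntegral.integral_smul c _ }
    (let ⟨M, hM⟩ := hT.exists_norm_le t; ⟨M * t, norm_integral_apply_le_of_norm_le ht hM⟩)

theorem integralCLM_apply (x : X) : hT.integralCLM ht x = ∫ s in 0..t, T s x := rfl

theorem norm_integralCLM_le {M : ℝ} (hM : ∀ s ∈ Icc 0 t, ‖T s‖ ≤ M) :
    ‖hT.integralCLM ht‖ ≤ M * t :=
  have hM0 : 0 ≤ M := (norm_nonneg _).trans (hM 0 ⟨le_rfl, ht⟩)
  (hT.integralCLM ht).opNorm_le_bound (by positivity) (norm_integral_apply_le_of_norm_le ht hM)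

theorem commute_integralCLM {h : ℝ} (hh : 0 ≤ h) : Commute (T h) (hT.integralCLM ht) := by
  ext x
  simp only [mul_apply_eq_comp, integralCLM_apply,
    ← (T h).intervalIntegral_comp_comm (hT.intervalIntegrable x le_rfl ht)]
  refine intervalIntegral.integral_congr fun s hs => ?_
  rw [uIcc_of_le ht] at hs
  simp only [← mul_apply_eq_comp, (hT.commute hh hs.1).eq]

theorem apply_integralCLM {h : ℝ} (hh : 0 ≤ h) (x : X) :
    T h (hT.integralCLM ht x) = (∫ s in 0..(t + h), T s x) - ∫ s in 0..h, T s x := by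
  rw [intervalIntegral.integral_interval_sub_left (hT.intervalIntegrable x le_rfl (by positivity))
    (hT.intervalIntegrable x le_rfl hh), integralCLM_apply,
    ← (T h).intervalIntegral_comp_comm (hT.intervalIntegrable x le_rfl ht)]
  calc ∫ s in 0..t, T h (T s x) = ∫ s in 0..t, T (s + h) x := by
        refine intervalIntegral.integral_congr fun s hs => ?_
        rw [uIcc_of_le ht] at hs
        simp only [add_comm s h, hT.map_add h s hh hs.1, mul_apply_eq_comp]
    _ = ∫ s in h..(t + h), T s x := by
        rw [intervalIntegral.integral_comp_add_right (fun s => T s x), zero_add]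

theorem apply_integralCLM_comm {h : ℝ} (hh : 0 ≤ h) (x : X) :
    T h (hT.integralCLM ht x) = hT.integralCLM ht (T h x) := by
  rw [← mul_apply_eq_comp, (hT.commute_integralCLM ht hh).eq, mul_apply_eq_comp]

theorem hasDerivWithinAt_integral (x : X) {u : ℝ} (hu : 0 ≤ u) :
    HasDerivWithinAt (fun v => ∫ s in 0..v, T s x) (T u x) (Ici u) u :=
  have hsub : Ioi u ⊆ Ici 0 := fun _ hs => hu.trans (le_of_lt hs)
  intervalIntegral.integral_hasDerivWithinAt_right (hT.intervalIntegrable x le_rfl hu)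
    (((hT.continuousOn x).mono hsub).stronglyMeasurableAtFilter_nhdsWithin measurableSet_Ioi u)
    ((hT.continuousOn x u hu).mono hsub)

theorem hasDerivWithinAt_apply_integralCLM (x : X) :
    HasDerivWithinAt (fun h => T h (hT.integralCLM ht x)) (T t x - x) (Ioi 0) 0 := by
  have hshift : HasDerivWithinAt (fun h => ∫ s in 0..(t + h), T s x) (T t x) (Ici 0) 0 := by
    have hmaps : MapsTo (fun h => t + h) (Ici 0) (Ici t) := fun h hh => by simpa using hh
    simpa [Function.comp_def] using (hT.hasDerivWithinAt_integral x ht).scomp_of_eq 0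
      ((hasDerivAt_id (0 : ℝ)).const_add t).hasDerivWithinAt hmaps (add_zero t).symm
  have hstart := hT.hasDerivWithinAt_integral x le_rfl
  rw [hT.map_zero, one_apply_eq_self] at hstart
  exact ((hshift.sub hstart).congr_of_mem (fun h hh => hT.apply_integralCLM ht hh x)
    (mem_Ici.2 le_rfl)).mono Ioi_subset_Ici_self

end IsStronglyContinuousSemigroup

namespace IsGenerator

variable [CompleteSpace X] {T : ℝ → X →L[ℂ] X} {D : Set X} {A : X → X} (hgen : IsGenerator T D A)
  (hT : IsStronglyContinuousSemigroup T) {t : ℝ} (ht : 0 ≤ t)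
include hgen

theorem integralCLM_mem (x : X) :
    hT.integralCLM ht x ∈ D ∧ A (hT.integralCLM ht x) = T t x - x := by
  rw [isGenerator_iff_hasDerivWithinAt hT.map_zero] at hgen
  have hderiv := hT.hasDerivWithinAt_apply_integralCLM ht x
  have hmem := (hgen.1 _).2 ⟨_, hderiv⟩
  exact ⟨hmem, (uniqueDiffWithinAt_Ioi 0).eq_deriv _ (hgen.2 _ hmem) hderiv⟩

theorem integralCLM_apply_of_mem {x : X} (hx : x ∈ D) :
    hT.integralCLM ht (A x) = T t x - x := by
  rw [isGenerator_iff_hasDerivWithinAt hT.map_zero] at hgen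
  have hderiv : HasDerivWithinAt (fun h => T h (hT.integralCLM ht x)) (hT.integralCLM ht (A x))
      (Ioi 0) 0 :=
    (((hT.integralCLM ht).restrictScalars ℝ).hasFDerivAt.comp_hasDerivWithinAt 0
      (hgen.2 x hx)).congr
      (fun h hh => hT.apply_integralCLM_comm ht (le_of_lt hh) x)
      (hT.apply_integralCLM_comm ht le_rfl x)
  exact (uniqueDiffWithinAt_Ioi 0).eq_deriv _ hderiv (hT.hasDerivWithinAt_apply_integralCLM ht x)

variable {R : X →L[ℂ] X} (hR₁ : R * (1 - T t) = 1)
include hR₁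

theorem neg_mul_integralCLM_apply_generator {x : X} (hx : x ∈ D) :
    (-(R * hT.integralCLM ht)) (A x) = x := by
  rw [neg_apply, mul_apply_eq_comp, hgen.integralCLM_apply_of_mem hT ht hx, ← map_neg, neg_sub]
  simpa [mul_apply_eq_comp] using congr($hR₁ x)

theorem neg_mul_integralCLM_apply_mem (hR₂ : (1 - T t) * R = 1) (x : X) :
    (-(R * hT.integralCLM ht)) x ∈ D ∧ A ((-(R * hT.integralCLM ht)) x) = x := by
  let W : (X →L[ℂ] X)ˣ := ⟨1 - T t, R, hR₂, hR₁⟩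
  have hcomm : Commute (hT.integralCLM ht) R :=
    ((Commute.one_right _).sub_right (hT.commute_integralCLM ht ht).symm).units_inv_right (u := W)
  have hB : (-(R * hT.integralCLM ht)) x = hT.integralCLM ht (-R x) := by
    rw [neg_apply, ← hcomm.eq, mul_apply_eq_comp, map_neg]
  obtain ⟨hmem, hgenerator⟩ := hgen.integralCLM_mem hT ht (-R x)
  refine ⟨hB ▸ hmem, ?_⟩
  rw [hB, hgenerator, map_neg, sub_neg_eq_add, neg_add_eq_sub]
  simpa [mul_apply_eq_comp] using congr($hR₂ x)

end IsGenerator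

end

theorem stmt_15_general {X : Type*} [NormedAddCommGroup X] [NormedSpace ℂ X] [CompleteSpace X]
    (T : ℝ → X →L[ℂ] X) (hT0 : T 0 = 1)
    (hTadd : ∀ t s : ℝ, 0 ≤ t → 0 ≤ s → T (t + s) = T t * T s)
    (hTcont : ∀ x : X, ContinuousOn (fun t : ℝ => T t x) (Ici 0))
    (D : Set X) (A : X → X) (hgen : IsGenerator T D A)
    (α t : ℝ) (ht : 0 < t) (ζ : ℂ) (hζ : ζ = Complex.exp (Complex.I * t * α))
    (Q : X →L[ℂ] X) (hQ1 : Q * (ζ • 1 - T t) = 1) (hQ2 : (ζ • 1 - T t) * Q = 1) :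
    ∃ B : X →L[ℂ] X,
      (∀ x : X, B x = -(Complex.exp (Complex.I * t * α) •
          Q (∫ s in (0 : ℝ)..t, Complex.exp (-(Complex.I * s * α)) • T s x))) ∧
      (∀ x ∈ D, B (A x - (Complex.I * α) • x) = x) ∧
      (∀ x : X, B x ∈ D ∧ A (B x) - (Complex.I * α) • B x = x) ∧
      (∀ K M : ℝ, ‖Q‖ ≤ K → (∀ s ∈ Icc (0 : ℝ) t, ‖T s‖ ≤ M) → ‖B‖ ≤ K * M * t) := by
  obtain ⟨S, hS_def⟩ : ∃ S : ℝ → X →L[ℂ] X,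
      S = fun r : ℝ => Complex.exp (-(Complex.I * α) * r) • T r := ⟨_, rfl⟩
  have hS : IsStronglyContinuousSemigroup S :=
    hS_def ▸ IsStronglyContinuousSemigroup.cexp_mul_smul ⟨hT0, hTadd, hTcont⟩ _
  have hgenS : IsGenerator S D (fun x => A x - (Complex.I * α) • x) := by
    simpa only [hS_def, neg_smul, ← sub_eq_add_neg] using
      hgen.cexp_mul_smul hT0 (-(Complex.I * α))
  have hζS : ζ • S t = T t := by
    rw [hS_def, smul_smul, hζ, ← Complex.exp_add,
      show Complex.I * t * α + -(Complex.I * α) * t = 0 by ring, Complex.exp_zero, one_smul]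
  have hR₁ := mul_one_sub_eq_one_of_smul_eq hζS hQ1
  refine ⟨-((ζ • Q) * hS.integralCLM ht.le), fun x => ?_,
    fun x hx => hgenS.neg_mul_integralCLM_apply_generator hS ht.le hR₁ hx,
    hgenS.neg_mul_integralCLM_apply_mem hS ht.le hR₁ (one_sub_mul_eq_one_of_smul_eq hζS hQ2),
    fun K M hK hM => ?_⟩
  · rw [neg_apply, mul_apply_eq_comp, smul_apply, hζ, hS.integralCLM_apply, hS_def]
    congr! 5 with s
    rw [smul_apply]
    ring_nf
  · have hMS : ∀ s ∈ Icc 0 t, ‖S s‖ ≤ M := fun s hs => by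
      simpa [hS_def, norm_smul, Complex.norm_exp] using hM s hs
    have hζQ : ‖ζ • Q‖ ≤ K := by simpa [norm_smul, hζ, Complex.norm_exp] using hK
    calc ‖-((ζ • Q) * hS.integralCLM ht.le)‖ ≤ ‖ζ • Q‖ * ‖hS.integralCLM ht.le‖ :=
          (norm_neg _).trans_le (norm_mul_le _ _)
      _ ≤ K * (M * t) := mul_le_mul hζQ (hS.norm_integralCLM_le ht.le hMS) (norm_nonneg _)
          ((norm_nonneg _).trans hK)
      _ = K * M * t := by ring

theorem stmt_15 {X : Type*} [NormedAddCommGroup X] [NormedSpace ℂ X] [CompleteSpace X]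
    (T : ℝ → X →L[ℂ] X) (hT0 : T 0 = 1)
    (hTadd : ∀ t s : ℝ, 0 ≤ t → 0 ≤ s → T (t + s) = T t * T s)
    (hTcont : ∀ x : X, ContinuousOn (fun t : ℝ => T t x) (Ici 0))
    (D : Set X) (A : X → X) (hgen : IsGenerator T D A)
    (hdense : Dense D)
    (hclosed : IsClosed {p : X × X | p.1 ∈ D ∧ p.2 = A p.1})
    (α t : ℝ) (ht : 0 < t) (ζ : ℂ) (hζ : ζ = Complex.exp (Complex.I * t * α))
    (Q : X →L[ℂ] X) (hQ1 : Q * (ζ • 1 - T t) = 1) (hQ2 : (ζ • 1 - T t) * Q = 1) :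
    ∃ B : X →L[ℂ] X,
      (∀ x : X, B x = -(Complex.exp (Complex.I * t * α) •
          Q (∫ s in (0 : ℝ)..t, Complex.exp (-(Complex.I * s * α)) • T s x))) ∧
      (∀ x ∈ D, B (A x - (Complex.I * α) • x) = x) ∧
      (∀ x : X, B x ∈ D ∧ A (B x) - (Complex.I * α) • B x = x) ∧
      (∀ K M : ℝ, ‖Q‖ ≤ K → (∀ s ∈ Icc (0 : ℝ) t, ‖T s‖ ≤ M) → ‖B‖ ≤ K * M * t) :=
  stmt_15_general T hT0 hTadd hTcont D A hgen α t ht ζ hζ Q hQ1 hQ2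
end

section
/- Let $(T(t))_{t \ge 0}$ be a strongly continuous semigroup on a Banach space $X$ with generator $A$. Assume there exist $\zeta \in \mathbb{C}$ with $|\zeta| = 1$, $t_0 > 0$ and $K > 0$ such that for all $0 < t \le t_0$ the operator $\zeta - T(t)$ is invertible with $\|(\zeta - T(t))^{-1}\| \le K$. Then there exist $\alpha_0 > 0$ and $C > 0$ such that $i\alpha \in \rho(A)$ and $\|\alpha (A - i\alpha)^{-1}\| \le C$ for all real $\alpha$ with $|\alpha| > \alpha_0$. -/
/-!
For `μ = iα` and `τ > 0`, the truncated Laplace transform `F = ∫₀^τ e^{-μs} T(s) ds` satisfies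
`(A - μ) F = F (A - μ) = e^{-μτ} T(τ) - 1 = -e^{-μτ} (e^{μτ} - T(τ))`. Choosing `τ ∈ (0, 2π/|α|]`
with `e^{iατ} = ζ`, the right-hand side becomes `-ζ⁻¹ (ζ - T(τ))`, which is invertible with
inverse of norm at most `K` as soon as `2π/|α| ≤ t₀`. Hence `(A - iα)⁻¹ = -ζ (ζ - T(τ))⁻¹ F`, and
`‖F‖ ≤ τ M ≤ 2π M / |α|`, where `M` bounds `‖T(s)‖` on `[0, t₀]` by uniform boundedness.
-/

open Filter Set

open MeasureTheory intervalIntegral Topology Real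

lemma tendsto_inv_smul_integral_add_right {E : Type*} [NormedAddCommGroup E] [NormedSpace ℝ E]
    [CompleteSpace E] {g : ℝ → E} {a : ℝ} (hg : ContinuousOn g (Ici a)) :
    Tendsto (fun h : ℝ => h⁻¹ • ∫ s in a..a + h, g s) (𝓝[>] 0) (𝓝 (g a)) := by
  have hderiv : HasDerivWithinAt (fun b => ∫ s in a..b, g s) (g a) (Ici a) a :=
    integral_hasDerivWithinAt_right IntervalIntegrable.refl
      ((hg.mono Ioi_subset_Ici_self).stronglyMeasurableAtFilter_nhdsWithin measurableSet_Ioi a)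
      ((hg a self_mem_Ici).mono Ioi_subset_Ici_self)
  have hslope := hasDerivWithinAt_iff_tendsto_slope.mp hderiv
  rw [Ici_sdiff_left] at hslope
  have hshift : Tendsto (a + ·) (𝓝[>] (0 : ℝ)) (𝓝[>] a) := by
    have h := (Filter.map_add_left_nhdsGT (c := a) (a := (0 : ℝ))).le
    rwa [add_zero] at h
  refine (hslope.comp hshift).congr fun h => ?_
  simp [slope_def_module]

section Semigroup

variable {X : Type*} [NormedAddCommGroup X] [NormedSpace ℂ X] (T : ℝ → X →L[ℂ] X)

noncomputable def truncatedLaplace (μ : ℂ) (τ : ℝ) (y : X) : X :=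
  ∫ s in (0 : ℝ)..τ, Complex.exp (-(μ * s)) • T s y

variable {T}

lemma commute_of_map_add (hTadd : ∀ t s : ℝ, 0 ≤ t → 0 ≤ s → T (t + s) = T t * T s)
    {s t : ℝ} (hs : 0 ≤ s) (ht : 0 ≤ t) : Commute (T s) (T t) := by
  rw [Commute, SemiconjBy, ← hTadd s t hs ht, ← hTadd t s ht hs, add_comm]

lemma exists_pos_norm_le_of_continuousOn [CompleteSpace X]
    (hTcont : ∀ x : X, ContinuousOn (fun t : ℝ => T t x) (Ici 0)) (t₀ : ℝ) :
    ∃ M, 0 < M ∧ ∀ s ∈ Icc 0 t₀, ‖T s‖ ≤ M := by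
  obtain ⟨M, hM⟩ : ∃ M, ∀ s : Icc (0 : ℝ) t₀, ‖T s‖ ≤ M := by
    refine banach_steinhaus fun x => ?_
    obtain ⟨C, hC⟩ := isCompact_Icc.exists_bound_of_continuousOn
      ((hTcont x).mono Icc_subset_Ici_self)
    exact ⟨C, fun s => hC s s.2⟩
  exact ⟨max M 1, by positivity, fun s hs => (hM ⟨s, hs⟩).trans (le_max_left _ _)⟩

lemma norm_truncatedLaplace_le {μ : ℂ} (hμ : 0 ≤ μ.re) {τ M : ℝ} (hτ : 0 ≤ τ)
    (hM : ∀ s ∈ Icc 0 τ, ‖T s‖ ≤ M) (y : X) :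
    ‖truncatedLaplace T μ τ y‖ ≤ τ * M * ‖y‖ := by
  have hbound : ∀ s ∈ uIoc 0 τ, ‖Complex.exp (-(μ * s)) • T s y‖ ≤ M * ‖y‖ := by
    intro s hs
    rw [uIoc_of_le hτ] at hs
    have hexp : ‖Complex.exp (-(μ * s))‖ ≤ 1 := by
      rw [Complex.norm_exp, Real.exp_le_one_iff]
      simpa using mul_nonneg hμ hs.1.le
    calc ‖Complex.exp (-(μ * s)) • T s y‖ = ‖Complex.exp (-(μ * s))‖ * ‖T s y‖ := norm_smul _ _
      _ ≤ 1 * (M * ‖y‖) := mul_le_mul hexp ((T s).le_of_opNorm_le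
          (hM s (Ioc_subset_Icc_self hs)) y) (norm_nonneg _) zero_le_one
      _ = M * ‖y‖ := one_mul _
  calc ‖truncatedLaplace T μ τ y‖ ≤ M * ‖y‖ * |τ - 0| := norm_integral_le_of_norm_le_const hbound
    _ = τ * M * ‖y‖ := by rw [sub_zero, abs_of_nonneg hτ]; ring

section StronglyContinuous

variable (hTcont : ∀ x : X, ContinuousOn (fun t : ℝ => T t x) (Ici 0))
include hTcont

lemma continuousOn_exp_smul_apply (μ : ℂ) (y : X) :
    ContinuousOn (fun s : ℝ => Complex.exp (-(μ * s)) • T s y) (Ici 0) :=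
  (by fun_prop : Continuous fun s : ℝ => Complex.exp (-(μ * s))).continuousOn.smul (hTcont y)

lemma intervalIntegrable_exp_smul_apply (μ : ℂ) (y : X) {a b : ℝ} (ha : 0 ≤ a) (hb : 0 ≤ b) :
    IntervalIntegrable (fun s : ℝ => Complex.exp (-(μ * s)) • T s y) volume a b :=
  ((continuousOn_exp_smul_apply hTcont μ y).mono
    fun _ hx => (le_min ha hb).trans hx.1).intervalIntegrable

lemma exists_clm_eq_truncatedLaplace {μ : ℂ} (hμ : 0 ≤ μ.re) {τ M : ℝ} (hτ : 0 ≤ τ)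
    (hM : ∀ s ∈ Icc 0 τ, ‖T s‖ ≤ M) :
    ∃ F : X →L[ℂ] X, ⇑F = truncatedLaplace T μ τ ∧ ‖F‖ ≤ τ * M := by
  have hint := fun y : X => intervalIntegrable_exp_smul_apply hTcont μ y le_rfl hτ
  let L : X →ₗ[ℂ] X :=
    { toFun := truncatedLaplace T μ τ
      map_add' := fun y z => by
        simp only [truncatedLaplace, map_add, smul_add]
        exact integral_add (hint y) (hint z)
      map_smul' := fun c y => by
        simp only [truncatedLaplace, map_smul, RingHom.id_apply]
        rw [← intervalIntegral.integral_smul]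
        exact integral_congr fun s _ => smul_comm _ _ _ }
  have hM0 : 0 ≤ M := (norm_nonneg _).trans (hM 0 ⟨le_rfl, hτ⟩)
  exact ⟨L.mkContinuous (τ * M) (norm_truncatedLaplace_le hμ hτ hM), rfl,
    L.mkContinuous_norm_le (by positivity) _⟩

variable [CompleteSpace X]

lemma map_truncatedLaplace {Q : X →L[ℂ] X} (hQ : ∀ s, 0 ≤ s → Commute Q (T s)) (μ : ℂ)
    {τ : ℝ} (hτ : 0 ≤ τ) (y : X) :
    Q (truncatedLaplace T μ τ y) = truncatedLaplace T μ τ (Q y) := by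
  rw [truncatedLaplace, ← Q.intervalIntegral_comp_comm
    (intervalIntegrable_exp_smul_apply hTcont μ y le_rfl hτ)]
  refine integral_congr fun s hs => ?_
  have hs0 : 0 ≤ s := by rw [uIcc_of_le hτ] at hs; exact hs.1
  simp only [map_smul, ← mul_apply_eq_comp, (hQ s hs0).eq]

lemma commute_of_eq_truncatedLaplace {μ : ℂ} {τ : ℝ} (hτ : 0 ≤ τ) {F Q : X →L[ℂ] X}
    (hF : ⇑F = truncatedLaplace T μ τ) (hQ : ∀ s, 0 ≤ s → Commute Q (T s)) : Commute Q F :=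
  ContinuousLinearMap.ext fun y => by
    rw [mul_apply_eq_comp, mul_apply_eq_comp, hF]
    exact map_truncatedLaplace hTcont hQ μ hτ y

variable (hTadd : ∀ t s : ℝ, 0 ≤ t → 0 ≤ s → T (t + s) = T t * T s)
include hTadd

lemma apply_truncatedLaplace (μ : ℂ) {τ h : ℝ} (hτ : 0 ≤ τ) (hh : 0 ≤ h) (y : X) :
    T h (truncatedLaplace T μ τ y) = Complex.exp (μ * h) • (truncatedLaplace T μ τ y
      + (∫ s in τ..τ + h, Complex.exp (-(μ * s)) • T s y)
      - ∫ s in (0 : ℝ)..h, Complex.exp (-(μ * s)) • T s y) := by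
  set g : ℝ → X := fun s => Complex.exp (-(μ * s)) • T s y
  have hint : ∀ {b : ℝ}, 0 ≤ b → IntervalIntegrable g volume 0 b :=
    intervalIntegrable_exp_smul_apply hTcont μ y le_rfl
  have hsplit : ∫ s in h..τ + h, g s
      = truncatedLaplace T μ τ y + (∫ s in τ..τ + h, g s) - ∫ s in (0 : ℝ)..h, g s := by
    rw [← integral_interval_sub_left (hint (by positivity)) (hint hh),
      ← integral_interval_sub_left (hint (by positivity)) (hint hτ)]
    simp only [truncatedLaplace, g]
    abel
  have hshift := integral_comp_add_right g h (a := 0) (b := τ)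
  rw [zero_add] at hshift
  rw [← hsplit, ← hshift, ← intervalIntegral.integral_smul, truncatedLaplace,
    ← (T h).intervalIntegral_comp_comm (hint hτ)]
  refine integral_congr fun s hs => ?_
  have hs0 : 0 ≤ s := by rw [uIcc_of_le hτ] at hs; exact hs.1
  simp only [g, map_smul, ← mul_apply_eq_comp, ← hTadd h s hh hs0, smul_smul, ← Complex.exp_add,
    add_comm h s]
  congr 2
  push_cast
  ring

lemma tendsto_truncatedLaplace (hT0 : T 0 = 1) (μ : ℂ) {τ : ℝ} (hτ : 0 ≤ τ) (y : X) :
    Tendsto (fun h : ℝ => h⁻¹ • (T h (truncatedLaplace T μ τ y) - truncatedLaplace T μ τ y))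
      (𝓝[>] 0) (𝓝 (μ • truncatedLaplace T μ τ y - y + Complex.exp (-(μ * τ)) • T τ y)) := by
  set g : ℝ → X := fun s => Complex.exp (-(μ * s)) • T s y
  set G := truncatedLaplace T μ τ y
  have hexp : Tendsto (fun h : ℝ => h⁻¹ • (Complex.exp (μ * h) - 1)) (𝓝[>] 0) (𝓝 μ) := by
    have hderiv : HasDerivAt (fun t : ℝ => Complex.exp (μ * t)) μ 0 := by
      simpa using ((hasDerivAt_id (0 : ℂ)).const_mul μ).cexp.comp_ofReal
    simpa using hderiv.tendsto_slope_zero_right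
  have hexp_one : Tendsto (fun h : ℝ => Complex.exp (μ * h)) (𝓝[>] 0) (𝓝 1) := by
    simpa using ((by fun_prop : Continuous fun t : ℝ => Complex.exp (μ * t)).tendsto 0).mono_left
      nhdsWithin_le_nhds
  have hgc := continuousOn_exp_smul_apply hTcont μ y
  have hstart : Tendsto (fun h : ℝ => h⁻¹ • ∫ s in (0 : ℝ)..h, g s) (𝓝[>] 0) (𝓝 y) := by
    simpa [g, hT0] using tendsto_inv_smul_integral_add_right hgc
  have hend : Tendsto (fun h : ℝ => h⁻¹ • ∫ s in τ..τ + h, g s) (𝓝[>] 0) (𝓝 (g τ)) :=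
    tendsto_inv_smul_integral_add_right (hgc.mono (Ici_subset_Ici.2 hτ))
  have hdecomp : ∀ h : ℝ, 0 < h → h⁻¹ • (T h G - G) = (h⁻¹ • (Complex.exp (μ * h) - 1)) • G
      + Complex.exp (μ * h) • h⁻¹ • (∫ s in τ..τ + h, g s)
      - Complex.exp (μ * h) • h⁻¹ • ∫ s in (0 : ℝ)..h, g s := fun h hh => by
    rw [apply_truncatedLaplace hTcont hTadd μ hτ hh.le]
    match_scalars <;>
      simp only [Complex.real_smul, Complex.ofReal_inv, Complex.coe_algebraMap, mul_one] <;> ring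
  have hlim := ((hexp.smul_const G).add (hexp_one.smul hend)).sub (hexp_one.smul hstart)
  rw [one_smul, one_smul, add_sub_right_comm] at hlim
  exact hlim.congr' (eventually_nhdsWithin_of_forall fun h hh => (hdecomp h hh).symm)

end StronglyContinuous

end Semigroup

namespace IsGenerator

variable {X : Type*} [NormedAddCommGroup X] [NormedSpace ℂ X] {T : ℝ → X →L[ℂ] X} {D : Set X}
  {A : X → X}

lemma mem_and_eq_of_tendsto (hgen : IsGenerator T D A) {x y : X}
    (h : Tendsto (fun t : ℝ => t⁻¹ • (T t x - x)) (𝓝[>] 0) (𝓝 y)) : x ∈ D ∧ A x = y :=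
  have hx : x ∈ D := (hgen.1 x).2 ⟨y, h⟩
  ⟨hx, tendsto_nhds_unique (hgen.2 x hx) h⟩

lemma map_mem_and_apply_map (hgen : IsGenerator T D A) {F : X →L[ℂ] X}
    (hF : ∀ t, 0 ≤ t → Commute F (T t)) {x : X} (hx : x ∈ D) : F x ∈ D ∧ A (F x) = F (A x) := by
  refine hgen.mem_and_eq_of_tendsto (((F.continuous.tendsto _).comp (hgen.2 x hx)).congr' ?_)
  filter_upwards [self_mem_nhdsWithin] with t ht
  rw [Function.comp_apply, F.map_smul_of_tower, map_sub, ← mul_apply_eq_comp, (hF t ht.le).eq,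
    mul_apply_eq_comp]

lemma truncatedLaplace_mem_and_sub_smul [CompleteSpace X] (hgen : IsGenerator T D A)
    (hT0 : T 0 = 1) (hTadd : ∀ t s : ℝ, 0 ≤ t → 0 ≤ s → T (t + s) = T t * T s)
    (hTcont : ∀ x : X, ContinuousOn (fun t : ℝ => T t x) (Ici 0)) (μ : ℂ) {τ : ℝ} (hτ : 0 ≤ τ)
    (y : X) :
    truncatedLaplace T μ τ y ∈ D ∧ A (truncatedLaplace T μ τ y) - μ • truncatedLaplace T μ τ y
      = (-Complex.exp (-(μ * τ))) • (Complex.exp (μ * τ) • 1 - T τ) y := by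
  obtain ⟨hmem, happly⟩ := hgen.mem_and_eq_of_tendsto
    (tendsto_truncatedLaplace hTcont hTadd hT0 μ hτ y)
  refine ⟨hmem, ?_⟩
  rw [happly, sub_apply, smul_apply, one_apply_eq_self, smul_sub, smul_smul,
    neg_mul, ← Complex.exp_add, neg_add_cancel, Complex.exp_zero]
  module

lemma truncatedLaplace_apply_sub_smul [CompleteSpace X] (hgen : IsGenerator T D A)
    (hT0 : T 0 = 1) (hTadd : ∀ t s : ℝ, 0 ≤ t → 0 ≤ s → T (t + s) = T t * T s)
    (hTcont : ∀ x : X, ContinuousOn (fun t : ℝ => T t x) (Ici 0)) (μ : ℂ) {τ : ℝ} (hτ : 0 ≤ τ)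
    {F : X →L[ℂ] X} (hF : ⇑F = truncatedLaplace T μ τ) {x : X} (hx : x ∈ D) :
    F (A x - μ • x) = (-Complex.exp (-(μ * τ))) • (Complex.exp (μ * τ) • 1 - T τ) x := by
  have hcomm : ∀ t, 0 ≤ t → Commute F (T t) := fun t ht =>
    (commute_of_eq_truncatedLaplace hTcont hτ hF fun s hs => commute_of_map_add hTadd ht hs).symm
  rw [map_sub, map_smul, ← (hgen.map_mem_and_apply_map hcomm hx).2, hF]
  exact (hgen.truncatedLaplace_mem_and_sub_smul hT0 hTadd hTcont μ hτ x).2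

end IsGenerator

lemma commute_of_inverse_smul_one_sub {X : Type*} [NormedAddCommGroup X] [NormedSpace ℂ X]
    {T : ℝ → X →L[ℂ] X} (hTadd : ∀ t s : ℝ, 0 ≤ t → 0 ≤ s → T (t + s) = T t * T s)
    {τ : ℝ} (hτ : 0 ≤ τ) {ζ : ℂ} {Q : X →L[ℂ] X} (hQS : Q * (ζ • 1 - T τ) = 1)
    (hSQ : (ζ • 1 - T τ) * Q = 1) {s : ℝ} (hs : 0 ≤ s) : Commute Q (T s) :=
  have hS : Commute (ζ • 1 - T τ) (T s) :=
    ((Commute.one_left _).smul_left ζ).sub_left (commute_of_map_add hTadd hτ hs)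
  hS.units_inv_left (u := ⟨_, Q, hSQ, hQS⟩)

lemma smul_mul_inverse_of_factor {X : Type*} [NormedAddCommGroup X] [NormedSpace ℂ X]
    {D : Set X} {L : X → X} {F Q S : X →L[ℂ] X} {c : ℂ} (hc : c ≠ 0) (hFD : ∀ y, F y ∈ D)
    (hLF : ∀ y, L (F y) = c • S y) (hFL : ∀ x ∈ D, F (L x) = c • S x) (hQS : Q * S = 1)
    (hSQ : S * Q = 1) (hQF : Commute Q F) :
    (∀ x ∈ D, (c⁻¹ • (Q * F)) (L x) = x) ∧
      ∀ x, (c⁻¹ • (Q * F)) x ∈ D ∧ L ((c⁻¹ • (Q * F)) x) = x := by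
  have hB : ∀ x, (c⁻¹ • (Q * F)) x = F (c⁻¹ • Q x) := fun x => by
    rw [hQF.eq, smul_apply, mul_apply_eq_comp, map_smul]
  refine ⟨fun x hx => ?_, fun x => ⟨hB x ▸ hFD _, ?_⟩⟩
  · rw [smul_apply, mul_apply_eq_comp, hFL x hx, map_smul, smul_smul,
      inv_mul_cancel₀ hc, one_smul, ← mul_apply_eq_comp, hQS, one_apply_eq_self]
  · rw [hB, hLF, map_smul, smul_smul, mul_inv_cancel₀ hc, one_smul, ← mul_apply_eq_comp, hSQ,
      one_apply_eq_self]

lemma exists_mem_Ioc_exp_mul_I_eq (θ : ℝ) :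
    ∃ φ ∈ Ioc 0 (2 * π), Complex.exp (φ * Complex.I) = Complex.exp (θ * Complex.I) := by
  refine ⟨toIocMod Real.two_pi_pos 0 θ, by simpa using toIocMod_mem_Ioc Real.two_pi_pos 0 θ, ?_⟩
  have hmod : ((toIocMod Real.two_pi_pos 0 θ : ℝ) : ℂ) * Complex.I
      = θ * Complex.I - toIocDiv Real.two_pi_pos 0 θ * (2 * π * Complex.I) := by
    have h := toIocMod_add_toIocDiv_mul Real.two_pi_pos 0 θ
    rw [← sub_eq_iff_eq_add.mpr h.symm]
    push_cast
    ring
  rw [hmod, Complex.exp_sub, Complex.exp_int_mul_two_pi_mul_I, div_one]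

lemma exists_pos_mul_le_two_pi_exp_eq {ζ : ℂ} (hζ : ‖ζ‖ = 1) {α : ℝ} (hα : α ≠ 0) :
    ∃ τ > 0, |α| * τ ≤ 2 * π ∧ Complex.exp (Complex.I * α * τ) = ζ := by
  have harg : Complex.exp (Complex.arg ζ * Complex.I) = ζ := by
    simpa [hζ] using Complex.norm_mul_exp_arg_mul_I ζ
  have hα' : (α : ℂ) ≠ 0 := Complex.ofReal_ne_zero.2 hα
  rcases hα.lt_or_gt with hneg | hpos
  · obtain ⟨φ, ⟨hφ0, hφ⟩, hexp⟩ := exists_mem_Ioc_exp_mul_I_eq (-Complex.arg ζ)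
    refine ⟨φ / -α, div_pos hφ0 (neg_pos.2 hneg), ?_, ?_⟩
    · rwa [abs_of_neg hneg, mul_div_cancel₀ _ (neg_ne_zero.2 hα)]
    · have hατ : Complex.I * α * ((φ / -α : ℝ) : ℂ) = -(φ * Complex.I) := by
        push_cast
        field_simp
      rw [hατ, Complex.exp_neg, hexp, Complex.ofReal_neg, neg_mul, Complex.exp_neg, inv_inv, harg]
  · obtain ⟨φ, ⟨hφ0, hφ⟩, hexp⟩ := exists_mem_Ioc_exp_mul_I_eq (Complex.arg ζ)
    refine ⟨φ / α, div_pos hφ0 hpos, ?_, ?_⟩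
    · rwa [abs_of_pos hpos, mul_div_cancel₀ _ hα]
    · have hατ : Complex.I * α * ((φ / α : ℝ) : ℂ) = φ * Complex.I := by
        push_cast
        field_simp
      rw [hατ, hexp, harg]

theorem stmt_16 {X : Type*} [NormedAddCommGroup X] [NormedSpace ℂ X] [CompleteSpace X]
    (T : ℝ → X →L[ℂ] X) (hT0 : T 0 = 1)
    (hTadd : ∀ t s : ℝ, 0 ≤ t → 0 ≤ s → T (t + s) = T t * T s)
    (hTcont : ∀ x : X, ContinuousOn (fun t : ℝ => T t x) (Ici 0))
    (D : Set X) (A : X → X) (hgen : IsGenerator T D A)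
    (ζ : ℂ) (hζ : ‖ζ‖ = 1) (t₀ K : ℝ) (ht₀ : 0 < t₀) (hK : 0 < K)
    (hres : ∀ t : ℝ, 0 < t → t ≤ t₀ → ∃ Q : X →L[ℂ] X,
      Q * (ζ • 1 - T t) = 1 ∧ (ζ • 1 - T t) * Q = 1 ∧ ‖Q‖ ≤ K) :
    ∃ α₀ > (0 : ℝ), ∃ C > (0 : ℝ), ∀ α : ℝ, α₀ < |α| →
      ∃ B : X →L[ℂ] X,
        (∀ x ∈ D, B (A x - (Complex.I * α) • x) = x) ∧
        (∀ x : X, B x ∈ D ∧ A (B x) - (Complex.I * α) • B x = x) ∧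
        |α| * ‖B‖ ≤ C := by
  obtain ⟨M, hM0, hM⟩ := exists_pos_norm_le_of_continuousOn hTcont t₀
  refine ⟨2 * π / t₀, by positivity, 2 * π * M * K, by positivity, fun α hα => ?_⟩
  have hα0 : 0 < |α| := lt_trans (by positivity) hα
  obtain ⟨τ, hτ, hατ, hexp⟩ := exists_pos_mul_le_two_pi_exp_eq hζ (abs_pos.1 hα0)
  have hτt₀ : τ ≤ t₀ := by
    have := (div_lt_iff₀ ht₀).1 hα
    nlinarith
  obtain ⟨Q, hQS, hSQ, hQK⟩ := hres τ hτ hτt₀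
  set μ : ℂ := Complex.I * α
  have hc : -Complex.exp (-(μ * τ)) = -ζ⁻¹ := by rw [Complex.exp_neg, hexp]
  obtain ⟨F, hF, hFnorm⟩ := exists_clm_eq_truncatedLaplace hTcont (μ := μ) (by simp [μ]) hτ.le
    fun s hs => hM s ⟨hs.1, hs.2.trans hτt₀⟩
  have hQF : Commute Q F := commute_of_eq_truncatedLaplace hTcont hτ.le hF
    fun s hs => commute_of_inverse_smul_one_sub hTadd hτ.le hQS hSQ hs
  have hFy := fun y => hgen.truncatedLaplace_mem_and_sub_smul hT0 hTadd hTcont μ hτ.le y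
  obtain ⟨hleft, hright⟩ := smul_mul_inverse_of_factor (L := fun x => A x - μ • x)
    (neg_ne_zero.2 (inv_ne_zero (norm_ne_zero_iff.1 (hζ ▸ one_ne_zero))))
    (fun y => hF ▸ (hFy y).1) (fun y => by simpa [hF, hc, hexp] using (hFy y).2)
    (fun x hx => by simpa [hc, hexp] using
      hgen.truncatedLaplace_apply_sub_smul hT0 hTadd hTcont μ hτ.le hF hx) hQS hSQ hQF
  refine ⟨(-ζ⁻¹)⁻¹ • (Q * F), hleft, hright, ?_⟩
  calc |α| * ‖(-ζ⁻¹)⁻¹ • (Q * F)‖ ≤ |α| * (K * (τ * M)) := by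
        rw [norm_smul, norm_inv, norm_neg, norm_inv, hζ, inv_one, inv_one, one_mul]
        gcongr
        exact (norm_mul_le Q F).trans (mul_le_mul hQK hFnorm (norm_nonneg _) hK.le)
    _ = |α| * τ * (M * K) := by ring
    _ ≤ 2 * π * (M * K) := by gcongr
    _ = 2 * π * M * K := by ring
end

section
/- Let $X$ be a Banach space, $(U(t))_{t \in \mathbb{R}}$ a group of bounded operators with $\|U(t)\| \le M e^{\omega |t|}$ for constants $M \ge 1$, $\omega \ge 0$, and set $C(t) = \frac{1}{2}(U(t)+U(-t))$. Suppose $\limsup_{t \downarrow 0}\|C(t) - \mathrm{Id}\| = \rho < 2$. Then for every $\tilde{\rho} \in (\rho, 2)$ there exist $N \in \mathbb{N}$ and $t_1 > 0$ such that $\left\|\left(\tfrac{1}{2}(U(t) - \mathrm{Id})^2\right)^N\right\| \le \tilde{\rho}^N < 2^N$ for all $0 < t < t_1$. -/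
/-! With `C t = ½ (U t + U (-t))`, the group law gives `½ (U t - 1)² = U t (C t - 1)` with
commuting factors, so the `N`-th power is `U (N t) (C t - 1)^N`, of norm at most
`M (e^{ω t} ‖C t - 1‖)^N`. For small `t > 0` the limsup hypothesis keeps `e^{ω t} ‖C t - 1‖`
below some `σ < ρ'`, and `M σ^N ≤ ρ'^N` once `N` is large. -/

open Filter Topology

section HalfSquare

variable {𝕜 R : Type*} [Field 𝕜] [Ring R] [Algebra 𝕜 R] {a b : R}

theorem commute_smul_add_sub_one (hab : a * b = 1) (hba : b * a = 1) (c : 𝕜) :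
    Commute a (c • (a + b) - 1) :=
  (((Commute.refl a).add_right (hab.trans hba.symm)).smul_right c).sub_right (.one_right a)

variable [CharZero 𝕜]

theorem half_smul_sub_one_sq_eq_mul (hab : a * b = 1) :
    (1 / 2 : 𝕜) • (a - 1) ^ 2 = a * ((1 / 2 : 𝕜) • (a + b) - 1) := by
  have hsq : (a - 1) ^ 2 = a * a + 1 - (2 : 𝕜) • a := by
    rw [two_smul]; noncomm_ring
  rw [hsq, mul_sub, mul_smul_comm, mul_add, hab, mul_one]
  module

theorem half_smul_sub_one_sq_pow (hab : a * b = 1) (hba : b * a = 1) (n : ℕ) :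
    ((1 / 2 : 𝕜) • (a - 1) ^ 2) ^ n = a ^ n * ((1 / 2 : 𝕜) • (a + b) - 1) ^ n := by
  rw [half_smul_sub_one_sq_eq_mul hab, (commute_smul_add_sub_one hab hba _).mul_pow]

end HalfSquare

namespace AddChar

variable {A : Type*} [AddGroup A]

theorem map_mul_map_neg {M : Type*} [Monoid M] (ψ : AddChar A M) (x : A) : ψ x * ψ (-x) = 1 := by
  rw [← map_add_eq_mul, add_neg_cancel, map_zero_eq_one]

theorem map_neg_mul_map {M : Type*} [Monoid M] (ψ : AddChar A M) (x : A) : ψ (-x) * ψ x = 1 := by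
  rw [← map_add_eq_mul, neg_add_cancel, map_zero_eq_one]

theorem half_smul_map_sub_one_sq_pow {𝕜 R : Type*} [Field 𝕜] [CharZero 𝕜] [Ring R] [Algebra 𝕜 R]
    (ψ : AddChar A R) (x : A) (n : ℕ) :
    ((1 / 2 : 𝕜) • (ψ x - 1) ^ 2) ^ n = ψ (n • x) * ((1 / 2 : 𝕜) • (ψ x + ψ (-x)) - 1) ^ n := by
  rw [half_smul_sub_one_sq_pow (ψ.map_mul_map_neg x) (ψ.map_neg_mul_map x), map_nsmul_eq_pow]

end AddChar

section ExponentialBound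

variable {R : Type*} [NormedRing R] {U : ℝ → R} {M ω : ℝ}

theorem isBoundedUnder_norm_half_smul_add_sub_one [NormedAlgebra ℝ R]
    (hU : ∀ t, ‖U t‖ ≤ M * Real.exp (ω * |t|)) :
    IsBoundedUnder (· ≤ ·) (𝓝 0) fun t => ‖(1 / 2 : ℝ) • (U t + U (-t)) - 1‖ := by
  have hbound : Tendsto (fun t : ℝ => M * Real.exp (ω * |t|) + ‖(1 : R)‖) (𝓝 0)
      (𝓝 (M * Real.exp (ω * |0|) + ‖(1 : R)‖)) :=
    (by fun_prop : Continuous fun t : ℝ => M * Real.exp (ω * |t|) + ‖(1 : R)‖).tendsto 0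
  refine hbound.isBoundedUnder_le.mono_le (Eventually.of_forall fun t => ?_)
  have hUneg : ‖U (-t)‖ ≤ M * Real.exp (ω * |t|) := by simpa using hU (-t)
  calc ‖(1 / 2 : ℝ) • (U t + U (-t)) - 1‖
      ≤ 1 / 2 * (‖U t‖ + ‖U (-t)‖) + ‖(1 : R)‖ := by
        grw [norm_sub_le, norm_smul, norm_add_le,
          Real.norm_of_nonneg (by norm_num : (0 : ℝ) ≤ 1 / 2)]
    _ ≤ M * Real.exp (ω * |t|) + ‖(1 : R)‖ := by linarith [hU t, hUneg]

theorem norm_nsmul_le_mul_exp_pow (hU : ∀ t, ‖U t‖ ≤ M * Real.exp (ω * |t|)) {t : ℝ}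
    (ht : 0 ≤ t) (n : ℕ) : ‖U (n • t)‖ ≤ M * Real.exp (ω * t) ^ n := by
  calc ‖U (n • t)‖ ≤ M * Real.exp (ω * |n • t|) := hU _
    _ = M * Real.exp (ω * t) ^ n := by
      rw [abs_of_nonneg (nsmul_nonneg ht n), nsmul_eq_mul, ← Real.exp_nat_mul, mul_left_comm]

end ExponentialBound

theorem eventually_mul_pow_le_pow {M σ ρ : ℝ} (hσ : 0 ≤ σ) (hσρ : σ < ρ) :
    ∀ᶠ n : ℕ in atTop, M * σ ^ n ≤ ρ ^ n := by
  have hρ : 0 < ρ := hσ.trans_lt hσρ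
  have hlim : Tendsto (fun n : ℕ => M * (σ / ρ) ^ n) atTop (𝓝 0) := by
    simpa using (tendsto_pow_atTop_nhds_zero_of_lt_one (div_nonneg hσ hρ.le)
      ((div_lt_one hρ).2 hσρ)).const_mul M
  filter_upwards [hlim.eventually_le_const one_pos] with n hn
  calc M * σ ^ n = M * (σ / ρ) ^ n * ρ ^ n := by
        rw [div_pow, mul_assoc, div_mul_cancel₀ _ (by positivity)]
    _ ≤ 1 * ρ ^ n := by gcongr
    _ = ρ ^ n := one_mul _

theorem stmt_18_general {X : Type*} [NormedAddCommGroup X] [NormedSpace ℝ X]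
    (U : ℝ → X →L[ℝ] X) (hU0 : U 0 = 1) (hUadd : ∀ t s : ℝ, U (t + s) = U t * U s)
    (M ω : ℝ) (hM : 1 ≤ M) (hUbound : ∀ t : ℝ, ‖U t‖ ≤ M * Real.exp (ω * |t|))
    (ρ : ℝ)
    (hρ : Filter.limsup (fun t : ℝ => ‖(1 / 2 : ℝ) • (U t + U (-t)) - 1‖)
        (nhdsWithin 0 (Set.Ioi 0)) = ρ) :
    ∀ ρ' : ℝ, ρ < ρ' → ρ' < 2 →
      ∃ N : ℕ, ∃ t₁ > (0 : ℝ), ∀ t : ℝ, 0 < t → t < t₁ →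
        ‖((1 / 2 : ℝ) • (U t - 1) ^ 2) ^ N‖ ≤ ρ' ^ N ∧ ρ' ^ N < 2 ^ N := by
  intro ρ' hρρ' hρ'2
  let ψ : AddChar ℝ (X →L[ℝ] X) := ⟨U, hU0, hUadd⟩
  obtain ⟨r, hρr, hrρ'⟩ := exists_between hρρ'
  obtain ⟨σ, hrσ, hσρ'⟩ := exists_between hrρ'
  have hcos : ∀ᶠ t in 𝓝[>] 0, ‖(1 / 2 : ℝ) • (U t + U (-t)) - 1‖ < r :=
    eventually_lt_of_limsup_lt (hρ ▸ hρr)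
      ((isBoundedUnder_norm_half_smul_add_sub_one hUbound).mono nhdsWithin_le_nhds)
  have hexp : ∀ᶠ t in 𝓝[>] 0, Real.exp (ω * t) * r < σ := by
    have hlim : Tendsto (fun t => Real.exp (ω * t) * r) (𝓝[>] 0) (𝓝 r) := by
      simpa using ((by fun_prop : Continuous fun t => Real.exp (ω * t) * r).tendsto 0).mono_left
        nhdsWithin_le_nhds
    exact hlim.eventually_lt_const hrσ
  have hr : 0 < r := by
    obtain ⟨t, ht⟩ := hcos.exists
    exact (norm_nonneg _).trans_lt ht
  obtain ⟨N, hN, hN1⟩ :=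
    ((eventually_mul_pow_le_pow (M := M) (hr.trans hrσ).le hσρ').and (eventually_ge_atTop 1)).exists
  obtain ⟨t₁, ht₁, hsmall⟩ := mem_nhdsGT_iff_exists_Ioo_subset.1 (hcos.and hexp)
  refine ⟨N, t₁, ht₁, fun t ht htt₁ => ⟨?_, pow_lt_pow_left₀ hρ'2 (by linarith) (by omega)⟩⟩
  obtain ⟨hCt, hEt⟩ := hsmall ⟨ht, htt₁⟩
  set D := (1 / 2 : ℝ) • (U t + U (-t)) - 1
  calc ‖((1 / 2 : ℝ) • (U t - 1) ^ 2) ^ N‖ = ‖ψ (N • t) * D ^ N‖ :=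
        congrArg norm (ψ.half_smul_map_sub_one_sq_pow t N)
    _ ≤ ‖ψ (N • t)‖ * ‖D‖ ^ N := (norm_mul_le _ _).trans (by gcongr; exact norm_pow_le' _ hN1)
    _ ≤ M * Real.exp (ω * t) ^ N * ‖D‖ ^ N := by
        gcongr; exact norm_nsmul_le_mul_exp_pow hUbound ht.le N
    _ = M * (Real.exp (ω * t) * ‖D‖) ^ N := by rw [mul_pow, mul_assoc]
    _ ≤ M * σ ^ N := by
        gcongr
        exact (mul_le_mul_of_nonneg_left hCt.le (Real.exp_pos _).le).trans hEt.le
    _ ≤ ρ' ^ N := hN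

theorem stmt_18 {X : Type*} [NormedAddCommGroup X] [NormedSpace ℝ X]
    (U : ℝ → X →L[ℝ] X) (hU0 : U 0 = 1) (hUadd : ∀ t s : ℝ, U (t + s) = U t * U s)
    (M ω : ℝ) (hM : 1 ≤ M) (hω : 0 ≤ ω) (hUbound : ∀ t : ℝ, ‖U t‖ ≤ M * Real.exp (ω * |t|))
    (ρ : ℝ)
    (hρ : Filter.limsup (fun t : ℝ => ‖(1 / 2 : ℝ) • (U t + U (-t)) - 1‖)
        (nhdsWithin 0 (Set.Ioi 0)) = ρ)
    (hρ2 : ρ < 2) :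
    ∀ ρ' : ℝ, ρ < ρ' → ρ' < 2 →
      ∃ N : ℕ, ∃ t₁ > (0 : ℝ), ∀ t : ℝ, 0 < t → t < t₁ →
        ‖((1 / 2 : ℝ) • (U t - 1) ^ 2) ^ N‖ ≤ ρ' ^ N ∧ ρ' ^ N < 2 ^ N :=
  stmt_18_general U hU0 hUadd M ω hM hUbound ρ hρ
end
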